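/- arXiv:math-ph/0407009 — 4 statements merged into one kernel-verified Lean document; each statement's English description precedes it below -/
import Mathlib

section
/- For any n-type ν on a finite alphabet of m letters and any source q with all q_i > 0, the type probability satisfies (n+1)^{-m} · exp(-n·I(ν‖q)) ≤ π(ν; q) ≤ exp(-n·I(ν‖q)), where I(p‖q) = ∑ p_i log(p_i/q_i) is the Kullback–Leibler divergence. -/
open Real Filter Topology Finset

/-- A probability mass function on `Fin m`. -/
def IsPMF {m : ℕ} (p : Fin m → ℝ) : Prop := (∀ i, 0 ≤ p i) ∧ ∑ i, p i = 1

/-- An `n`-type: a pmf whose entries are integer multiples of `1/n`. -/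
def IsType {m : ℕ} (n : ℕ) (ν : Fin m → ℝ) : Prop :=
  IsPMF ν ∧ ∀ i, ∃ k : ℕ, ν i = (k : ℝ) / n

/-- Multiplicity `Γ(ν) = n! / ∏ (n νᵢ)!` of an `n`-type. -/
noncomputable def mult {m : ℕ} (n : ℕ) (ν : Fin m → ℝ) : ℝ :=
  (n.factorial : ℝ) / ∏ i, (Nat.factorial ⌊(n : ℝ) * ν i⌋₊ : ℝ)

/-- Probability `π(ν; q) = Γ(ν) ∏ qᵢ^{n νᵢ}` of the type `ν` in `n` iid draws from `q`. -/
noncomputable def typeProb {m : ℕ} (n : ℕ) (ν q : Fin m → ℝ) : ℝ :=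
  mult n ν * ∏ i, q i ^ ((n : ℝ) * ν i)

/-- Kullback–Leibler divergence (with `0 log 0 = 0`, automatic since `Real.log 0 = 0`). -/
noncomputable def KL {m : ℕ} (p q : Fin m → ℝ) : ℝ := ∑ i, p i * Real.log (p i / q i)

/-- Shannon entropy. -/
noncomputable def entH {m : ℕ} (ν : Fin m → ℝ) : ℝ := -∑ i, ν i * Real.log (ν i)

/-- Total variation metric `d(a,b) = ∑ |aᵢ - bᵢ|`. -/
noncomputable def tv {m : ℕ} (a b : Fin m → ℝ) : ℝ := ∑ i, |a i - b i|

/-- The finite set of all `n`-types on `Fin m`. -/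
noncomputable def typeFinset (n m : ℕ) : Finset (Fin m → ℝ) := by
  classical
  exact ((Fintype.piFinset (fun _ : Fin m => Finset.range (n + 1))).filter
      (fun k => ∑ i, k i = n)).image (fun k i => (k i : ℝ) / n)

open scoped Classical in
/-- Conditional probability that the empirical `n`-type lies in `A`, given it lies in `B`;
expressed as a ratio of type-probability sums. -/
noncomputable def condProb {m : ℕ} (n : ℕ) (q : Fin m → ℝ)
    (A B : Set (Fin m → ℝ)) : ℝ :=
  (∑ ν ∈ (typeFinset n m).filter (fun ν => ν ∈ A ∩ B), typeProb n ν q) /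
  (∑ ν ∈ (typeFinset n m).filter (fun ν => ν ∈ B), typeProb n ν q)


/-! Write `ν = k / n`. Then `π(ν; q) = π(ν; ν) · exp (-n I(ν‖q))`, so everything reduces to bounding
`π(ν; ν) = multinomial(k) · ∏ νᵢ ^ kᵢ`. It is one term of the multinomial expansion of
`(∑ νᵢ) ^ n = 1`, hence at most `1`; and it is the largest of the at most `(n + 1) ^ m` terms,
since `kᵢ! · kᵢ ^ lᵢ ≤ lᵢ! · kᵢ ^ kᵢ` for all `lᵢ`, hence at least `(n + 1) ^ (-m)`. -/

open Nat in
theorem Nat.factorial_mul_pow_le_factorial_mul_pow (a b : ℕ) : a ! * a ^ b ≤ b ! * a ^ a := by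
  rcases le_total a b with hab | hba
  · calc a ! * a ^ b = a ! * a ^ (b - a) * a ^ a := by
          rw [mul_assoc, ← pow_add, Nat.sub_add_cancel hab]
      _ ≤ b ! * a ^ a := Nat.mul_le_mul_right _ (factorial_mul_pow_sub_le_factorial hab)
  · calc a ! * a ^ b = b ! * a.descFactorial (a - b) * a ^ b := by
          rw [← factorial_mul_descFactorial (Nat.sub_le a b), Nat.sub_sub_self hba]
      _ ≤ b ! * a ^ (a - b) * a ^ b := by gcongr; exact descFactorial_le_pow _ _
      _ = b ! * a ^ a := by rw [mul_assoc, ← pow_add, Nat.sub_add_cancel hba]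

open Nat in
theorem Nat.multinomial_mul_prod_pow_le {ι : Type*} [Fintype ι] {k l : ι → ℕ}
    (h : ∑ i, l i = ∑ i, k i) :
    multinomial univ l * ∏ i, k i ^ l i ≤ multinomial univ k * ∏ i, k i ^ k i := by
  have key : (∏ i, (k i)!) * ∏ i, k i ^ l i ≤ (∏ i, (l i)!) * ∏ i, k i ^ k i := by
    rw [← prod_mul_distrib, ← prod_mul_distrib]
    exact prod_le_prod' fun i _ => factorial_mul_pow_le_factorial_mul_pow (k i) (l i)
  refine Nat.le_of_mul_le_mul_left (c := (∏ i, (k i)!) * ∏ i, (l i)!) ?_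
    (Nat.mul_pos (prod_pos fun i _ => factorial_pos _) (prod_pos fun i _ => factorial_pos _))
  calc (∏ i, (k i)!) * (∏ i, (l i)!) * (multinomial univ l * ∏ i, k i ^ l i)
      = (∑ i, k i)! * ((∏ i, (k i)!) * ∏ i, k i ^ l i) := by
        rw [← h, ← multinomial_spec]; ring
    _ ≤ (∑ i, k i)! * ((∏ i, (l i)!) * ∏ i, k i ^ k i) := by gcongr
    _ = (∏ i, (k i)!) * (∏ i, (l i)!) * (multinomial univ k * ∏ i, k i ^ k i) := by
        rw [← multinomial_spec]; ring

section Multinomial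

variable {ι : Type*}

noncomputable def empirical (n : ℕ) (k : ι → ℕ) (i : ι) : ℝ := (k i : ℝ) / n

theorem empirical_nonneg (n : ℕ) (k : ι → ℕ) (i : ι) : 0 ≤ empirical n k i := by
  unfold empirical; positivity

variable [Fintype ι]

noncomputable def multinomialProb (k : ι → ℕ) (p : ι → ℝ) : ℝ :=
  Nat.multinomial univ k * ∏ i, p i ^ k i

theorem multinomialProb_nonneg (k : ι → ℕ) {p : ι → ℝ} (hp : ∀ i, 0 ≤ p i) :
    0 ≤ multinomialProb k p :=
  mul_nonneg (Nat.cast_nonneg _) (prod_nonneg fun i _ => pow_nonneg (hp i) _)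

theorem sum_multinomialProb [DecidableEq ι] (p : ι → ℝ) (n : ℕ) :
    ∑ l ∈ piAntidiag univ n, multinomialProb l p = (∑ i, p i) ^ n :=
  (sum_pow_eq_sum_piAntidiag univ p n).symm

theorem card_piAntidiag_univ_le [DecidableEq ι] (n : ℕ) :
    #(piAntidiag (univ : Finset ι) n) ≤ (n + 1) ^ Fintype.card ι := by
  calc #(piAntidiag (univ : Finset ι) n)
      ≤ #(Fintype.piFinset fun _ : ι => range (n + 1)) := by
        refine card_le_card fun l hl => Fintype.mem_piFinset.2 fun i => mem_range.2 ?_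
        rw [mem_piAntidiag] at hl
        exact Nat.lt_succ_of_le (hl.1 ▸ single_le_sum (fun j _ => Nat.zero_le (l j)) (mem_univ i))
    _ = (n + 1) ^ Fintype.card ι := by simp

theorem sum_empirical_pow {n : ℕ} {k : ι → ℕ} (hk : ∑ i, k i = n) :
    (∑ i, empirical n k i) ^ n = 1 := by
  rcases eq_or_ne n 0 with rfl | hn
  · exact pow_zero _
  · simp only [empirical]
    rw [← sum_div, ← Nat.cast_sum, hk, div_self (Nat.cast_ne_zero.2 hn), one_pow]

theorem multinomialProb_empirical_le {n : ℕ} {k l : ι → ℕ} (hk : ∑ i, k i = n)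
    (hl : ∑ i, l i = n) :
    multinomialProb l (empirical n k) ≤ multinomialProb k (empirical n k) := by
  have hprod : ∀ j : ι → ℕ, ∑ i, j i = n →
      multinomialProb j (empirical n k) =
        ((Nat.multinomial univ j * ∏ i, k i ^ j i : ℕ) : ℝ) / n ^ n := by
    intro j hj
    simp only [multinomialProb, empirical, div_pow, prod_div_distrib, prod_pow_eq_pow_sum, hj]
    push_cast
    ring
  rw [hprod l hl, hprod k hk]
  exact div_le_div_of_nonneg_right
    (Nat.cast_le.2 (Nat.multinomial_mul_prod_pow_le (hl.trans hk.symm))) (by positivity)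

theorem multinomialProb_empirical_le_one [DecidableEq ι] {n : ℕ} {k : ι → ℕ}
    (hk : ∑ i, k i = n) : multinomialProb k (empirical n k) ≤ 1 := by
  rw [← sum_empirical_pow hk, ← sum_multinomialProb]
  exact single_le_sum (fun l _ => multinomialProb_nonneg l (empirical_nonneg n k))
    (mem_piAntidiag.2 ⟨hk, fun i _ => mem_univ i⟩)

theorem inv_card_le_multinomialProb_empirical [DecidableEq ι] {n : ℕ} {k : ι → ℕ}
    (hk : ∑ i, k i = n) :
    (((n : ℝ) + 1) ^ Fintype.card ι)⁻¹ ≤ multinomialProb k (empirical n k) := by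
  have hnonneg := multinomialProb_nonneg k (empirical_nonneg n k)
  rw [inv_le_iff_one_le_mul₀' (by positivity)]
  calc (1 : ℝ) = ∑ l ∈ piAntidiag univ n, multinomialProb l (empirical n k) := by
        rw [sum_multinomialProb, sum_empirical_pow hk]
    _ ≤ ∑ l ∈ piAntidiag univ n, multinomialProb k (empirical n k) :=
        sum_le_sum fun l hl => multinomialProb_empirical_le hk (mem_piAntidiag.1 hl).1
    _ = #(piAntidiag univ n) * multinomialProb k (empirical n k) := by
        rw [sum_const, nsmul_eq_mul]
    _ ≤ ((n : ℝ) + 1) ^ Fintype.card ι * multinomialProb k (empirical n k) := by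
        gcongr
        exact_mod_cast card_piAntidiag_univ_le n

end Multinomial

theorem rpow_natCast_mul_eq_pow_mul_exp {n k : ℕ} {x y : ℝ} (hy : 0 < y)
    (hx : (n : ℝ) * x = k) : y ^ ((n : ℝ) * x) = x ^ k * exp (-(n * (x * log (x / y)))) := by
  rw [hx, rpow_natCast, ← mul_assoc, hx]
  rcases Nat.eq_zero_or_pos k with rfl | hk
  · simp
  have hx0 : 0 < x := pos_of_mul_pos_right (hx ▸ Nat.cast_pos.2 hk) n.cast_nonneg
  rw [← mul_neg, ← log_inv, inv_div, exp_nat_mul, exp_log (div_pos hy hx0), ← mul_pow,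
    mul_div_cancel₀ _ hx0.ne']

theorem mult_eq_multinomial {m n : ℕ} {ν : Fin m → ℝ} {k : Fin m → ℕ}
    (hk : ∀ i, (n : ℝ) * ν i = k i) (hn : ∑ i, k i = n) : mult n ν = Nat.multinomial univ k := by
  simp only [mult, hk, Nat.floor_natCast]
  rw [div_eq_iff (by positivity), ← hn]
  exact_mod_cast (Nat.multinomial_spec univ k).symm.trans (mul_comm _ _)

theorem typeProb_eq_multinomialProb_mul_exp {m n : ℕ} {ν q : Fin m → ℝ} {k : Fin m → ℕ}
    (hk : ∀ i, (n : ℝ) * ν i = k i) (hn : ∑ i, k i = n) (hq : ∀ i, 0 < q i) :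
    typeProb n ν q = multinomialProb k ν * exp (-(n : ℝ) * KL ν q) := by
  simp only [typeProb, mult_eq_multinomial hk hn,
    fun i => rpow_natCast_mul_eq_pow_mul_exp (hq i) (hk i), prod_mul_distrib, ← exp_sum,
    multinomialProb, KL, mul_sum, neg_mul, sum_neg_distrib]
  ring

theorem stmt2_general {m n : ℕ} (ν q : Fin m → ℝ) (hν : IsType n ν)
    (hqpos : ∀ i, 0 < q i) :
    (((n : ℝ) + 1) ^ m)⁻¹ * Real.exp (-(n : ℝ) * KL ν q) ≤ typeProb n ν q ∧
      typeProb n ν q ≤ Real.exp (-(n : ℝ) * KL ν q) := by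
  obtain ⟨⟨-, hν1⟩, hνk⟩ := hν
  choose k hk using hνk
  obtain rfl : ν = empirical n k := funext hk
  have hn : n ≠ 0 := by rintro rfl; simp [empirical] at hν1
  have hsum : ∑ i, k i = n := by
    simp only [empirical] at hν1
    rw [← sum_div, div_eq_one_iff_eq (Nat.cast_ne_zero.2 hn)] at hν1
    exact_mod_cast hν1
  have hnk : ∀ i, (n : ℝ) * empirical n k i = k i := fun i => by
    simp only [empirical]; field_simp
  rw [typeProb_eq_multinomialProb_mul_exp hnk hsum hqpos]
  have hexp := (exp_pos (-(n : ℝ) * KL (empirical n k) q)).le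
  constructor
  · simpa using mul_le_mul_of_nonneg_right (inv_card_le_multinomialProb_empirical hsum) hexp
  · simpa using mul_le_mul_of_nonneg_right (multinomialProb_empirical_le_one hsum) hexp

/-- For any n-type ν and strictly positive source q,
(n+1)^{-m} exp(-n I(ν‖q)) ≤ π(ν; q) ≤ exp(-n I(ν‖q)). -/
theorem stmt2 {m n : ℕ} (ν q : Fin m → ℝ) (hν : IsType n ν)
    (hq : IsPMF q) (hqpos : ∀ i, 0 < q i) :
    (((n : ℝ) + 1) ^ m)⁻¹ * Real.exp (-(n : ℝ) * KL ν q) ≤ typeProb n ν q ∧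
      typeProb n ν q ≤ Real.exp (-(n : ℝ) * KL ν q) :=
  stmt2_general ν q hν hqpos
end

section
/- Let q be a source on a finite alphabet with all q_i > 0, and let Π be a subset of the simplex whose closure has inf_{p∈Π} I(p‖q) = c < ∞, attained only on a finite set. Then (1/n) log P(ν^n ∈ Π) → −c as n → ∞, provided every minimizer is a limit of n-types in Π. -/
open Real Filter Topology Finset

lemma aux_pow_succ_le (n : ℕ) : ((n:ℝ)+1)^n ≤ Real.exp 1 * (n:ℝ)^n := by
  rcases Nat.eq_zero_or_pos n with h | h
  · subst h; simpa using Real.one_le_exp (by norm_num)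
  · have hn : (0:ℝ) < n := by exact_mod_cast h
    have h1 : ((n:ℝ)+1) ≤ (n:ℝ) * Real.exp (1/n) := by
      have := Real.add_one_le_exp (1/(n:ℝ))
      calc ((n:ℝ)+1) = (n:ℝ) * (1/(n:ℝ) + 1) := by field_simp; ring
        _ ≤ (n:ℝ) * Real.exp (1/n) := by
            apply mul_le_mul_of_nonneg_left _ hn.le; linarith
    calc ((n:ℝ)+1)^n ≤ ((n:ℝ) * Real.exp (1/n))^n := by
          apply pow_le_pow_left₀ (by positivity) h1
      _ = (n:ℝ)^n * Real.exp (1/n) ^ n := mul_pow _ _ _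
      _ = Real.exp 1 * (n:ℝ)^n := by
          rw [← Real.exp_nat_mul]
          have : (n:ℝ) * (1/n) = 1 := by field_simp
          rw [this, mul_comm]

lemma aux_exp_mul_pow_le (n : ℕ) (h : 1 ≤ n) :
    Real.exp 1 * (n:ℝ)^(n+1) ≤ ((n:ℝ)+1)^(n+1) := by
  have hn : (0:ℝ) < n := by exact_mod_cast h
  have hlog : 1/((n:ℝ)+1) ≤ Real.log (((n:ℝ)+1)/n) := by
    have h2 : Real.log ((n:ℝ)/((n:ℝ)+1)) ≤ (n:ℝ)/((n:ℝ)+1) - 1 :=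
      Real.log_le_sub_one_of_pos (by positivity)
    have h3 : Real.log (((n:ℝ)+1)/n) = - Real.log ((n:ℝ)/((n:ℝ)+1)) := by
      rw [← Real.log_inv]; congr 1; field_simp
    have h4 : (n:ℝ)/((n:ℝ)+1) - 1 = -(1/((n:ℝ)+1)) := by field_simp; ring
    rw [h3]; rw [h4] at h2; linarith
  have key : Real.exp 1 ≤ (((n:ℝ)+1)/n)^(n+1) := by
    have hb : (0:ℝ) < ((n:ℝ)+1)/n := by positivity
    have : Real.exp 1 ≤ Real.exp (((n:ℕ)+1:ℕ) * Real.log (((n:ℝ)+1)/n)) := by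
      apply Real.exp_le_exp.2
      have : (1:ℝ) ≤ ((n:ℝ)+1) * (1/((n:ℝ)+1)) := by field_simp; exact le_rfl
      calc (1:ℝ) = ((n:ℝ)+1) * (1/((n:ℝ)+1)) := by field_simp
        _ ≤ ((n:ℝ)+1) * Real.log (((n:ℝ)+1)/n) := by
            apply mul_le_mul_of_nonneg_left hlog (by positivity)
        _ = (((n:ℕ)+1:ℕ):ℝ) * Real.log (((n:ℝ)+1)/n) := by push_cast; ring
    calc Real.exp 1 ≤ Real.exp (((n:ℕ)+1:ℕ) * Real.log (((n:ℝ)+1)/n)) := this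
      _ = Real.exp (Real.log (((n:ℝ)+1)/n)) ^ ((n:ℕ)+1) := Real.exp_nat_mul _ _
      _ = (((n:ℝ)+1)/n)^(n+1) := by rw [Real.exp_log hb]
  calc Real.exp 1 * (n:ℝ)^(n+1) ≤ (((n:ℝ)+1)/n)^(n+1) * (n:ℝ)^(n+1) := by
        apply mul_le_mul_of_nonneg_right key (by positivity)
    _ = ((n:ℝ)+1)^(n+1) := by rw [div_pow]; field_simp

lemma fact_lower (n : ℕ) : ((n:ℝ)/Real.exp 1)^n ≤ (n.factorial : ℝ) := by
  induction n with
  | zero => simp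
  | succ n ih =>
    have he : (0:ℝ) < Real.exp 1 := Real.exp_pos 1
    have step : (((n:ℝ)+1)/Real.exp 1)^(n+1) ≤ ((n:ℝ)+1) * ((n:ℝ)/Real.exp 1)^n := by
      rw [div_pow, div_pow, div_le_iff₀ (by positivity)]
      have h2 := aux_pow_succ_le n
      calc ((n:ℝ)+1)^(n+1) = ((n:ℝ)+1)^n * ((n:ℝ)+1) := pow_succ _ _
        _ ≤ (Real.exp 1 * (n:ℝ)^n) * ((n:ℝ)+1) := by
            apply mul_le_mul_of_nonneg_right h2 (by positivity)
        _ = ((n:ℝ)+1) * ((n:ℝ)^n / Real.exp 1 ^ n) * Real.exp 1 ^ (n+1) := by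
            rw [pow_succ]; field_simp
    calc ((((n:ℕ)+1:ℕ):ℝ) / Real.exp 1)^(n+1) = (((n:ℝ)+1)/Real.exp 1)^(n+1) := by
          push_cast; ring_nf
      _ ≤ ((n:ℝ)+1) * ((n:ℝ)/Real.exp 1)^n := step
      _ ≤ ((n:ℝ)+1) * (n.factorial : ℝ) := by
          apply mul_le_mul_of_nonneg_left ih (by positivity)
      _ = ((n+1).factorial : ℝ) := by rw [Nat.factorial_succ]; push_cast; ring

lemma fact_upper (n : ℕ) :
    (n.factorial : ℝ) ≤ Real.exp 1 * (max n 1 : ℕ) * ((n:ℝ)/Real.exp 1)^n := by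
  induction n with
  | zero => simpa using Real.one_le_exp zero_le_one
  | succ n ih =>
    have he : (0:ℝ) < Real.exp 1 := Real.exp_pos 1
    rcases Nat.eq_zero_or_pos n with h | h
    · subst h
      simp only [Nat.factorial, pow_one]
      norm_num
    · have hmax : max n 1 = n := Nat.max_eq_left h
      rw [hmax] at ih
      have hmax2 : max (n+1) 1 = n+1 := Nat.max_eq_left (by omega)
      rw [hmax2]
      have hn : (0:ℝ) < n := by exact_mod_cast h
      have key : (n:ℝ) * ((n:ℝ)/Real.exp 1)^n ≤ (((n:ℝ)+1)/Real.exp 1)^(n+1) := by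
        rw [div_pow, div_pow, ← mul_div_assoc,
          div_le_div_iff₀ (by positivity) (by positivity)]
        have := aux_exp_mul_pow_le n h
        calc (n:ℝ) * (n:ℝ)^n * Real.exp 1 ^ (n+1)
            = (Real.exp 1 * (n:ℝ)^(n+1)) * Real.exp 1 ^ n := by rw [pow_succ, pow_succ]; ring
          _ ≤ ((n:ℝ)+1)^(n+1) * Real.exp 1 ^ n := by
              apply mul_le_mul_of_nonneg_right this (by positivity)
      calc (((n+1).factorial : ℕ) : ℝ) = ((n:ℝ)+1) * (n.factorial : ℝ) := by
            rw [Nat.factorial_succ]; push_cast; ring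
        _ ≤ ((n:ℝ)+1) * (Real.exp 1 * (n:ℝ) * ((n:ℝ)/Real.exp 1)^n) := by
            apply mul_le_mul_of_nonneg_left ih (by positivity)
        _ = (Real.exp 1 * ((n:ℝ)+1)) * ((n:ℝ) * ((n:ℝ)/Real.exp 1)^n) := by ring
        _ ≤ (Real.exp 1 * ((n:ℝ)+1)) * (((n:ℝ)+1)/Real.exp 1)^(n+1) := by
            apply mul_le_mul_of_nonneg_left key (by positivity)
        _ = Real.exp 1 * (((n:ℕ)+1:ℕ):ℝ) * ((((n:ℕ)+1:ℕ):ℝ)/Real.exp 1)^(n+1) := by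
            push_cast; ring

lemma isType_mk {m n : ℕ} (hn : 1 ≤ n) {k : Fin m → ℕ} (hk : ∑ i, k i = n) :
    IsType n (fun i => (k i : ℝ)/n) := by
  have hn' : (0:ℝ) < n := by exact_mod_cast hn
  refine ⟨⟨fun i => by positivity, ?_⟩, fun i => ⟨k i, rfl⟩⟩
  rw [← Finset.sum_div]
  rw [div_eq_one_iff_eq hn'.ne']
  exact_mod_cast hk

lemma exists_rep {m n : ℕ} (hn : 1 ≤ n) {ν : Fin m → ℝ} (hν : IsType n ν) :
    ∃ k : Fin m → ℕ, (∑ i, k i = n) ∧ ν = fun i => (k i : ℝ)/n := by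
  have hn' : (0:ℝ) < n := by exact_mod_cast hn
  choose k hkν using hν.2
  refine ⟨k, ?_, funext hkν⟩
  have hs : ∑ i, ((k i : ℝ)/n) = 1 := by rw [← funext hkν (α := Fin m)] at *; exact hν.1.2
  have : ((∑ i, k i : ℕ) : ℝ) = n := by
    push_cast
    rw [← Finset.sum_div] at hs
    field_simp at hs
    linarith
  exact_mod_cast this

lemma mem_typeFinset {m n : ℕ} (hn : 1 ≤ n) {ν : Fin m → ℝ} (hν : IsType n ν) :
    ν ∈ typeFinset n m := by
  classical
  obtain ⟨k, hks, hkν⟩ := exists_rep hn hν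
  rw [typeFinset, Finset.mem_image]
  refine ⟨k, ?_, hkν.symm⟩
  rw [Finset.mem_filter]
  constructor
  · rw [Fintype.mem_piFinset]
    intro i
    rw [Finset.mem_range]
    have : k i ≤ n := by
      rw [← hks]
      exact Finset.single_le_sum (f := fun i => k i) (fun _ _ => Nat.zero_le _)
        (Finset.mem_univ i)
    omega
  · exact hks

lemma of_mem_typeFinset {m n : ℕ} {ν : Fin m → ℝ} (hν : ν ∈ typeFinset n m) :
    ∃ k : Fin m → ℕ, (∑ i, k i = n) ∧ ν = fun i => (k i : ℝ)/n := by
  classical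
  rw [typeFinset, Finset.mem_image] at hν
  obtain ⟨k, hk, hkν⟩ := hν
  rw [Finset.mem_filter] at hk
  exact ⟨k, hk.2, hkν.symm⟩

lemma typeFinset_card {m n : ℕ} : (typeFinset n m).card ≤ (n+1)^m := by
  classical
  calc (typeFinset n m).card
      ≤ ((Fintype.piFinset (fun _ : Fin m => Finset.range (n + 1))).filter
          (fun k => ∑ i, k i = n)).card := Finset.card_image_le
    _ ≤ (Fintype.piFinset (fun _ : Fin m => Finset.range (n + 1))).card :=
        Finset.card_filter_le _ _
    _ = (n+1)^m := by
        rw [Fintype.card_piFinset]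
        simp [Finset.card_range]

lemma typeProb_nonneg {m n : ℕ} {ν q : Fin m → ℝ} (hq : ∀ i, 0 ≤ q i) :
    0 ≤ typeProb n ν q := by
  apply mul_nonneg
  · apply div_nonneg (by positivity)
    apply Finset.prod_nonneg; intro i _; positivity
  · apply Finset.prod_nonneg; intro i _; exact Real.rpow_nonneg (hq i) _

lemma type_bounds {m n : ℕ} (hn : 1 ≤ n) {q ν : Fin m → ℝ} (hqpos : ∀ i, 0 < q i)
    (hν : IsType n ν) :
    Real.exp (-((n:ℝ) * KL ν q)) / (Real.exp 1 * n)^m ≤ typeProb n ν q ∧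
      typeProb n ν q ≤ Real.exp 1 * n * Real.exp (-((n:ℝ) * KL ν q)) := by
  classical
  have hn' : (0:ℝ) < n := by exact_mod_cast hn
  have he : (0:ℝ) < Real.exp 1 := Real.exp_pos 1
  obtain ⟨k, hks, hkν⟩ := exists_rep hn hν
  subst hkν
  set ν : Fin m → ℝ := fun i => (k i : ℝ)/n with hνdef
  have hmul : ∀ i, (n:ℝ) * ν i = (k i : ℝ) := fun i => mul_div_cancel₀ _ hn'.ne'
  have hki : ∀ i, k i ≤ n := by
    intro i; rw [← hks]
    exact Finset.single_le_sum (f := fun i => k i) (fun _ _ => Nat.zero_le _) (Finset.mem_univ i)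
  set E : ℝ := ∏ i, q i ^ (k i) with hEdef
  have hE : 0 < E := Finset.prod_pos fun i _ => pow_pos (hqpos i) _
  set P : ℝ := ∏ i, ((k i : ℝ))^(k i) with hPdef
  have hP : 0 < P := by
    apply Finset.prod_pos; intro i _
    rcases Nat.eq_zero_or_pos (k i) with h | h
    · rw [h]; norm_num
    · exact pow_pos (by exact_mod_cast h) _
  have hfac_pos : (0:ℝ) < ∏ i, ((k i).factorial : ℝ) :=
    Finset.prod_pos fun i _ => by exact_mod_cast (k i).factorial_pos
  have htp : typeProb n ν q = ((n.factorial:ℝ) / ∏ i, ((k i).factorial : ℝ)) * E := by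
    unfold typeProb mult
    congr 1
    · congr 1
      apply Finset.prod_congr rfl; intro i _
      rw [hmul i, Nat.floor_natCast]
    · apply Finset.prod_congr rfl; intro i _
      rw [hmul i, Real.rpow_natCast]
  -- entropy identity
  have hent : -((n:ℝ) * entH ν) = ∑ i, (k i : ℝ) * Real.log ((k i : ℝ)/n) := by
    unfold entH
    rw [mul_neg, neg_neg, Finset.mul_sum]
    apply Finset.sum_congr rfl; intro i _
    rw [← mul_assoc, hmul i]
  have hprodkn : ∏ i, ((k i : ℝ)/n)^(k i) = P / (n:ℝ)^n := by
    rw [hPdef]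
    rw [← hks]
    rw [← Finset.prod_pow_eq_pow_sum]
    rw [← Finset.prod_div_distrib]
    apply Finset.prod_congr rfl; intro i _
    rw [div_pow]
  have hHexp : Real.exp ((n:ℝ) * entH ν) = (n:ℝ)^n / P := by
    have h1 : Real.exp (-((n:ℝ) * entH ν)) = P / (n:ℝ)^n := by
      rw [hent, Real.exp_sum, ← hprodkn]
      apply Finset.prod_congr rfl; intro i _
      rcases Nat.eq_zero_or_pos (k i) with h | h
      · rw [h]; norm_num
      · have hpos : (0:ℝ) < (k i : ℝ)/n := by
          apply div_pos _ hn'; exact_mod_cast h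
        rw [Real.exp_nat_mul, Real.exp_log hpos]
    have := congrArg (·⁻¹) h1
    simp only [← Real.exp_neg, neg_neg] at this
    rw [this, inv_div]
  -- KL identity
  have hlogE : Real.log E = ∑ i, (k i : ℝ) * Real.log (q i) := by
    rw [hEdef, Real.log_prod (fun i _ => pow_ne_zero _ (hqpos i).ne')]
    apply Finset.sum_congr rfl; intro i _
    rw [Real.log_pow]
  have hKLsum : (n:ℝ) * KL ν q = -((n:ℝ) * entH ν) - Real.log E := by
    unfold KL
    rw [Finset.mul_sum, hent, hlogE, ← Finset.sum_sub_distrib]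
    apply Finset.sum_congr rfl; intro i _
    rw [← mul_assoc, hmul i]
    rcases Nat.eq_zero_or_pos (k i) with h | h
    · rw [h]; norm_num
    · have hpos : (0:ℝ) < ν i := by
        apply div_pos _ hn'; exact_mod_cast h
      rw [Real.log_div hpos.ne' (hqpos i).ne', mul_sub]
  have hexpKL : Real.exp (-((n:ℝ) * KL ν q)) = ((n:ℝ)^n / P) * E := by
    have h9 : -((n:ℝ) * KL ν q) = Real.log E + (n:ℝ) * entH ν := by rw [hKLsum]; ring
    rw [h9, Real.exp_add, Real.exp_log hE, hHexp]
    ring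
  -- multiplicity bounds
  have hfl : ((n:ℝ)/Real.exp 1)^n ≤ (n.factorial : ℝ) := fact_lower n
  have hfu : (n.factorial : ℝ) ≤ Real.exp 1 * n * ((n:ℝ)/Real.exp 1)^n := by
    have := fact_upper n
    rwa [Nat.max_eq_left hn] at this
  have hprodke : ∏ i, (((k i : ℝ))/Real.exp 1)^(k i) = P / Real.exp 1 ^ n := by
    rw [hPdef, ← hks, ← Finset.prod_pow_eq_pow_sum, ← Finset.prod_div_distrib]
    apply Finset.prod_congr rfl; intro i _; rw [div_pow]
  have hkfl : P / Real.exp 1 ^ n ≤ ∏ i, ((k i).factorial : ℝ) := by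
    rw [← hprodke]
    apply Finset.prod_le_prod (fun i _ => by positivity) (fun i _ => fact_lower (k i))
  have hkfu : ∏ i, ((k i).factorial : ℝ) ≤ (Real.exp 1 * n)^m * (P / Real.exp 1 ^ n) := by
    have h1 : ∀ i, ((k i).factorial : ℝ) ≤
        (Real.exp 1 * n) * (((k i : ℝ))/Real.exp 1)^(k i) := by
      intro i
      refine (fact_upper (k i)).trans ?_
      apply mul_le_mul_of_nonneg_right _ (by positivity)
      apply mul_le_mul_of_nonneg_left _ he.le
      have : max (k i) 1 ≤ n := by
        have := hki i; omega
      exact_mod_cast this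
    calc ∏ i, ((k i).factorial : ℝ)
        ≤ ∏ i, ((Real.exp 1 * n) * (((k i : ℝ))/Real.exp 1)^(k i)) := by
          apply Finset.prod_le_prod (fun i _ => by positivity) (fun i _ => h1 i)
      _ = (Real.exp 1 * n)^m * (P / Real.exp 1 ^ n) := by
          rw [Finset.prod_mul_distrib, Finset.prod_const, hprodke, Finset.card_univ,
            Fintype.card_fin]
  have hΓup : (n.factorial:ℝ)/(∏ i, ((k i).factorial : ℝ)) ≤
      Real.exp 1 * n * ((n:ℝ)^n / P) := by
    have h2 : (n.factorial:ℝ)/(∏ i, ((k i).factorial : ℝ)) ≤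
        (Real.exp 1 * n * ((n:ℝ)/Real.exp 1)^n) / (P / Real.exp 1 ^ n) :=
      div_le_div₀ (by positivity) hfu (by positivity) hkfl
    refine h2.trans_eq ?_
    rw [div_pow]
    field_simp
  have hΓlo : ((n:ℝ)^n / P) / (Real.exp 1 * n)^m ≤
      (n.factorial:ℝ)/(∏ i, ((k i).factorial : ℝ)) := by
    have h2 : (((n:ℝ)/Real.exp 1)^n) / ((Real.exp 1 * n)^m * (P / Real.exp 1 ^ n)) ≤
        (n.factorial:ℝ)/(∏ i, ((k i).factorial : ℝ)) :=
      div_le_div₀ (by positivity) hfl hfac_pos hkfu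
    refine Eq.trans_le ?_ h2
    rw [div_pow]
    field_simp
  constructor
  · rw [htp, hexpKL]
    calc ((n:ℝ)^n / P) * E / (Real.exp 1 * n)^m
        = (((n:ℝ)^n / P) / (Real.exp 1 * n)^m) * E := by ring
      _ ≤ ((n.factorial:ℝ)/(∏ i, ((k i).factorial : ℝ))) * E :=
          mul_le_mul_of_nonneg_right hΓlo hE.le
  · rw [htp, hexpKL]
    calc ((n.factorial:ℝ)/(∏ i, ((k i).factorial : ℝ))) * E
        ≤ (Real.exp 1 * n * ((n:ℝ)^n / P)) * E :=
          mul_le_mul_of_nonneg_right hΓup hE.le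
      _ = Real.exp 1 * (n:ℝ) * (((n:ℝ)^n / P) * E) := by ring

lemma tendsto_log_div_nat : Tendsto (fun n : ℕ => Real.log n / n) atTop (𝓝 0) := by
  have := (Real.isLittleO_log_id_atTop.tendsto_div_nhds_zero).comp
    (tendsto_natCast_atTop_atTop (R := ℝ))
  exact this

lemma tendsto_log_succ_div_nat :
    Tendsto (fun n : ℕ => Real.log ((n:ℝ)+1) / n) atTop (𝓝 0) := by
  apply squeeze_zero' (g := fun n : ℕ => 2 * Real.log n / n)
  · filter_upwards [eventually_ge_atTop 1] with n hn
    have hn' : (1:ℝ) ≤ n := by exact_mod_cast hn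
    apply div_nonneg (Real.log_nonneg (by linarith)) (by positivity)
  · filter_upwards [eventually_ge_atTop 2] with n hn
    have hn' : (2:ℝ) ≤ n := by exact_mod_cast hn
    have h1 : Real.log ((n:ℝ)+1) ≤ Real.log ((n:ℝ)^2) := by
      apply Real.log_le_log (by positivity)
      nlinarith
    rw [Real.log_pow] at h1
    have hn0 : (0:ℝ) < n := by linarith
    have h1' : Real.log ((n:ℝ)+1) ≤ 2 * Real.log n := by push_cast at h1; linarith
    rw [div_le_div_iff₀ hn0 hn0]
    exact mul_le_mul_of_nonneg_right h1' hn0.le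
  · have := tendsto_log_div_nat.const_mul (2:ℝ)
    simpa [mul_div_assoc] using this

open scoped Classical in
/-- If inf of I(·‖q) over (the closure of) S equals c, attained only on a
finite set, with every minimizer a limit of n-types in S, then
(1/n) log P(ν^n ∈ S) → −c. -/
theorem stmt12 {m : ℕ} (q : Fin m → ℝ) (hq : IsPMF q) (hqpos : ∀ i, 0 < q i)
    (S : Set (Fin m → ℝ)) (hsub : ∀ p ∈ S, IsPMF p)
    (c : ℝ) (hlb : ∀ p ∈ S, c ≤ KL p q)
    (hatt : ∃ p ∈ closure S, KL p q = c)
    (hfin : {p ∈ closure S | KL p q = c}.Finite)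
    (happrox : ∀ p ∈ closure S, KL p q = c →
      ∃ T : ℕ → Fin m → ℝ,
        (∀ᶠ n in atTop, IsType n (T n) ∧ T n ∈ S) ∧ Tendsto T atTop (𝓝 p)) :
    Tendsto
      (fun n => Real.log (∑ ν ∈ (typeFinset n m).filter (fun ν => ν ∈ S), typeProb n ν q)
        / n) atTop (𝓝 (-c)) := by
  obtain ⟨p₀, hp₀cl, hp₀KL⟩ := hatt
  obtain ⟨T, hT, hTtend⟩ := happrox p₀ hp₀cl hp₀KL
  have he : (0:ℝ) < Real.exp 1 := Real.exp_pos 1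
  -- continuity of KL(·, q)
  have hcont : Continuous fun p : Fin m → ℝ => KL p q := by
    have heq : (fun p : Fin m → ℝ => KL p q)
        = fun p => ∑ i, (p i * Real.log (p i) - p i * Real.log (q i)) := by
      funext p
      unfold KL
      apply Finset.sum_congr rfl; intro i _
      rcases eq_or_ne (p i) 0 with h | h
      · rw [h]; simp
      · rw [Real.log_div h (hqpos i).ne', mul_sub]
    rw [heq]
    exact continuous_finset_sum _ fun i _ =>
      ((Real.continuous_mul_log.comp (continuous_apply i)).sub
        ((continuous_apply i).mul continuous_const))
  have hKLT : Tendsto (fun n => KL (T n) q) atTop (𝓝 c) := by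
    have := (hcont.tendsto p₀).comp hTtend
    rwa [hp₀KL] at this
  -- squeeze
  have hA : Tendsto (fun n : ℕ => (1 + Real.log n)/n) atTop (𝓝 0) := by
    have h0 : (fun n : ℕ => 1/(n:ℝ) + Real.log n / n) = fun n : ℕ => (1 + Real.log n)/n := by
      funext n; rw [← add_div]
    have := tendsto_one_div_atTop_nhds_zero_nat.add tendsto_log_div_nat
    rw [h0] at this
    simpa using this
  apply tendsto_of_tendsto_of_tendsto_of_le_of_le'
    (g := fun n : ℕ => -KL (T n) q - ((m:ℝ) * (1 + Real.log n))/n)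
    (h := fun n : ℕ => ((m:ℝ) * Real.log ((n:ℝ)+1) + (1 + Real.log n))/n - c)
  · -- g → -c
    have h1 : Tendsto (fun n : ℕ => ((m:ℝ) * (1 + Real.log n))/n) atTop (𝓝 0) := by
      have := hA.const_mul (m:ℝ)
      simpa [mul_div_assoc] using this
    have := (hKLT.neg).sub h1
    simpa using this
  · -- h → -c
    have h1 : Tendsto (fun n : ℕ => ((m:ℝ) * Real.log ((n:ℝ)+1) + (1 + Real.log n))/n)
        atTop (𝓝 0) := by
      have h2 := (tendsto_log_succ_div_nat.const_mul (m:ℝ)).add hA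
      have heq : ∀ n : ℕ, (m:ℝ) * (Real.log ((n:ℝ)+1) / n) + (1 + Real.log n)/n
          = ((m:ℝ) * Real.log ((n:ℝ)+1) + (1 + Real.log n))/n := by
        intro n
        rw [← mul_div_assoc, ← add_div]
      simpa only [heq] using (by simpa using h2 :
        Tendsto (fun n : ℕ => (m:ℝ) * (Real.log ((n:ℝ)+1) / n) + (1 + Real.log n)/n)
          atTop (𝓝 0))
    have := h1.sub (tendsto_const_nhds (x := c))
    simpa using this
  · -- lower bound eventually
    filter_upwards [hT, eventually_ge_atTop 1] with n hn hn1
    obtain ⟨hTtype, hTS⟩ := hn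
    have hn' : (0:ℝ) < n := by exact_mod_cast hn1
    set Z := ∑ ν ∈ (typeFinset n m).filter (fun ν => ν ∈ S), typeProb n ν q with hZdef
    have hTmem : T n ∈ (typeFinset n m).filter (fun ν => ν ∈ S) :=
      Finset.mem_filter.2 ⟨mem_typeFinset hn1 hTtype, hTS⟩
    have hZ1 : typeProb n (T n) q ≤ Z :=
      Finset.single_le_sum (f := fun ν => typeProb n ν q)
        (fun ν _ => typeProb_nonneg (fun i => (hqpos i).le)) hTmem
    obtain ⟨hlo, _⟩ := type_bounds hn1 hqpos hTtype
    have hLB : (0:ℝ) < Real.exp (-((n:ℝ) * KL (T n) q)) / (Real.exp 1 * n)^m := by positivity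
    have hlogZ : -((n:ℝ) * KL (T n) q) - (m:ℝ) * (1 + Real.log n) ≤ Real.log Z := by
      have := Real.log_le_log hLB (hlo.trans hZ1)
      rwa [Real.log_div (Real.exp_ne_zero _) (by positivity), Real.log_exp, Real.log_pow,
        Real.log_mul he.ne' hn'.ne', Real.log_exp] at this
    have h5 := (div_le_div_iff_of_pos_right hn').mpr hlogZ
    refine le_trans (le_of_eq ?_) h5
    field_simp
  · -- upper bound eventually
    filter_upwards [hT, eventually_ge_atTop 1] with n hn hn1
    obtain ⟨hTtype, hTS⟩ := hn
    have hn' : (0:ℝ) < n := by exact_mod_cast hn1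
    set Z := ∑ ν ∈ (typeFinset n m).filter (fun ν => ν ∈ S), typeProb n ν q with hZdef
    have hTmem : T n ∈ (typeFinset n m).filter (fun ν => ν ∈ S) :=
      Finset.mem_filter.2 ⟨mem_typeFinset hn1 hTtype, hTS⟩
    have hZ1 : typeProb n (T n) q ≤ Z :=
      Finset.single_le_sum (f := fun ν => typeProb n ν q)
        (fun ν _ => typeProb_nonneg (fun i => (hqpos i).le)) hTmem
    obtain ⟨hlo, _⟩ := type_bounds hn1 hqpos hTtype
    have hLB : (0:ℝ) < Real.exp (-((n:ℝ) * KL (T n) q)) / (Real.exp 1 * n)^m := by positivity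
    have hZpos : (0:ℝ) < Z := lt_of_lt_of_le hLB (hlo.trans hZ1)
    set B := Real.exp 1 * n * Real.exp (-((n:ℝ) * c)) with hBdef
    have hB : (0:ℝ) < B := by positivity
    have hterm : ∀ ν ∈ (typeFinset n m).filter (fun ν => ν ∈ S), typeProb n ν q ≤ B := by
      intro ν hνmem
      obtain ⟨hνtf, hνS⟩ := Finset.mem_filter.1 hνmem
      obtain ⟨k, hks, hkν⟩ := of_mem_typeFinset hνtf
      have hνtype : IsType n ν := hkν ▸ isType_mk hn1 hks
      obtain ⟨_, hup⟩ := type_bounds hn1 hqpos hνtype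
      refine hup.trans ?_
      apply mul_le_mul_of_nonneg_left _ (by positivity)
      apply Real.exp_le_exp.2
      exact neg_le_neg (mul_le_mul_of_nonneg_left (hlb ν hνS) hn'.le)
    have hcard : ((((typeFinset n m).filter (fun ν => ν ∈ S)).card : ℕ) : ℝ)
        ≤ ((n:ℝ)+1)^m := by
      have h6 : ((typeFinset n m).filter (fun ν => ν ∈ S)).card ≤ (n+1)^m :=
        le_trans (Finset.card_filter_le _ _) typeFinset_card
      calc ((((typeFinset n m).filter (fun ν => ν ∈ S)).card : ℕ) : ℝ)
          ≤ (((n+1)^m : ℕ) : ℝ) := by exact_mod_cast h6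
        _ = ((n:ℝ)+1)^m := by push_cast; ring
    have hZB : Z ≤ ((n:ℝ)+1)^m * B := by
      calc Z ≤ ((typeFinset n m).filter (fun ν => ν ∈ S)).card • B :=
            Finset.sum_le_card_nsmul _ _ _ hterm
        _ = ((((typeFinset n m).filter (fun ν => ν ∈ S)).card : ℕ) : ℝ) * B :=
            nsmul_eq_mul _ _
        _ ≤ ((n:ℝ)+1)^m * B := mul_le_mul_of_nonneg_right hcard hB.le
    have hlogZ2 : Real.log Z ≤
        (m:ℝ) * Real.log ((n:ℝ)+1) + (1 + Real.log n) + (-((n:ℝ) * c)) := by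
      have h7 := Real.log_le_log hZpos hZB
      rw [Real.log_mul (by positivity) hB.ne', Real.log_pow, hBdef,
        Real.log_mul (by positivity) (Real.exp_ne_zero _),
        Real.log_mul he.ne' hn'.ne', Real.log_exp, Real.log_exp] at h7
      linarith
    have h8 := (div_le_div_iff_of_pos_right hn').mpr hlogZ2
    refine le_trans h8 (le_of_eq ?_)
    field_simp
    ring
end

section
/- Let q be a source on a finite alphabet with all q_i > 0 and let p̂ be an I-projection of q on a convex set Π intersecting the relative interior of the simplex. Then for every p ∈ Π, I(p‖q) ≥ I(p‖p̂) + I(p̂‖q) (the Pythagorean inequality for I-projections). -/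
open Real Filter Topology Finset

lemma term_hasDerivAt (a c qi : ℝ) (ha : 0 < a) (hqi : 0 < qi) :
    HasDerivAt (fun t : ℝ => (a + t * c) * Real.log ((a + t * c) / qi))
      (c * Real.log (a / qi) + c) 0 := by
  have hu : HasDerivAt (fun t : ℝ => a + t * c) c 0 := by
    simpa using ((hasDerivAt_id (0:ℝ)).mul_const c).const_add a
  have hv : HasDerivAt (fun t : ℝ => (a + t * c) / qi) (c / qi) 0 := hu.div_const qi
  have hne : (a + 0 * c) / qi ≠ 0 := by
    have h : a + 0 * c = a := by ring
    rw [h]; positivity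
  have hlog := hv.log hne
  have hmul := hu.fun_mul hlog
  have ha0 : a + 0 * c = a := by ring
  rw [ha0] at hmul
  have e : a * (c / qi / (a / qi)) = c := by
    rw [div_div_div_cancel_right₀ hqi.ne', ← mul_div_assoc, mul_div_cancel_left₀ _ ha.ne']
  rw [e] at hmul
  exact hmul

lemma deriv_nonneg_of_right_min {g : ℝ → ℝ} {d : ℝ} (hg : HasDerivAt g d 0)
    (h : ∀ t ∈ Set.Ioc (0:ℝ) 1, g 0 ≤ g t) : 0 ≤ d := by
  have h1 : Tendsto (slope g 0) (𝓝[>] 0) (𝓝 d) :=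
    (hasDerivAt_iff_tendsto_slope.1 hg).mono_left
      (nhdsWithin_mono 0 (fun x hx => ne_of_gt hx))
  refine ge_of_tendsto h1 ?_
  filter_upwards [Ioc_mem_nhdsGT_of_mem (α := ℝ) ⟨le_refl 0, one_pos⟩] with t ht
  rw [slope_def_field]
  have := h t ht
  have ht0 : 0 < t := ht.1
  apply div_nonneg (by linarith) (by linarith)


/-- Pythagorean inequality: If p̂ is an I-projection of q (q > 0) on a
convex set S meeting the relative interior of the simplex, then for all p ∈ S,
I(p‖q) ≥ I(p‖p̂) + I(p̂‖q). -/
theorem stmt15 {m : ℕ} (q : Fin m → ℝ) (hq : IsPMF q) (hqpos : ∀ i, 0 < q i)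
    (S : Set (Fin m → ℝ)) (hsub : ∀ p ∈ S, IsPMF p) (hconv : Convex ℝ S)
    (hint : ∃ p ∈ S, ∀ i, 0 < p i)
    (phat : Fin m → ℝ) (hmem : phat ∈ S) (hmin : ∀ p ∈ S, KL phat q ≤ KL p q) :
    ∀ p ∈ S, KL p phat + KL phat q ≤ KL p q := by
  classical
  have hphatPMF : IsPMF phat := hsub phat hmem
  -- points on the segment from phat to r lie in S
  have hline : ∀ r ∈ S, ∀ t ∈ Set.Icc (0:ℝ) 1,
      (fun i => phat i + t * (r i - phat i)) ∈ S := by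
    intro r hr t ht
    have := hconv hmem hr (by linarith [ht.2] : (0:ℝ) ≤ 1 - t) ht.1 (by ring)
    convert this using 1
    funext i
    simp [Pi.smul_apply, smul_eq_mul]
    ring
  -- the right-min property along segments
  have hrmin : ∀ r ∈ S, ∀ t ∈ Set.Ioc (0:ℝ) 1,
      (∑ i, (phat i + (0:ℝ) * (r i - phat i)) * Real.log ((phat i + (0:ℝ) * (r i - phat i)) / q i))
      ≤ ∑ i, (phat i + t * (r i - phat i)) * Real.log ((phat i + t * (r i - phat i)) / q i) := by
    intro r hr t ht
    have h1 : (∑ i, (phat i + (0:ℝ) * (r i - phat i)) * Real.log ((phat i + (0:ℝ) * (r i - phat i)) / q i)) = KL phat q := by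
      simp [KL]
    rw [h1]
    exact hmin _ (hline r hr t ⟨le_of_lt ht.1, ht.2⟩)
  obtain ⟨ps, hpsS, hpspos⟩ := hint
  -- Step 1: phat is strictly positive
  have hphatpos : ∀ i, 0 < phat i := by
    by_contra hcon
    push_neg at hcon
    obtain ⟨j, hjle⟩ := hcon
    have hj0 : phat j = 0 := le_antisymm hjle (hphatPMF.1 j)
    set f : Fin m → ℝ → ℝ := fun i t =>
      (phat i + t * (ps i - phat i)) * Real.log ((phat i + t * (ps i - phat i)) / q i) with hf
    set P : Finset (Fin m) := Finset.univ.filter (fun i => 0 < phat i) with hPdef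
    set Z : Finset (Fin m) := Finset.univ.filter (fun i => ¬ 0 < phat i) with hZdef
    have hZ0 : ∀ i ∈ Z, phat i = 0 := by
      intro i hi
      rw [hZdef] at hi
      simp at hi
      exact le_antisymm hi (hphatPMF.1 i)
    have hjZ : j ∈ Z := by simp [hZdef, hj0]
    set Q : ℝ → ℝ := fun t => ((∑ i, f i t) - ∑ i, f i 0) / t with hQdef
    -- Q is nonneg on Ioc 0 1
    have hQnonneg : ∀ t ∈ Set.Ioc (0:ℝ) 1, 0 ≤ Q t := by
      intro t ht
      have := hrmin ps hpsS t ht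
      have h0 : (∑ i, f i 0) = ∑ i, (phat i + (0:ℝ) * (ps i - phat i)) * Real.log ((phat i + (0:ℝ) * (ps i - phat i)) / q i) := rfl
      apply div_nonneg _ (le_of_lt ht.1)
      rw [h0]
      linarith [this]
    -- decomposition for t > 0
    have hdecomp : ∀ t : ℝ, 0 < t →
        Q t = (∑ i ∈ P, (f i t - f i 0) / t)
          + ((∑ i ∈ Z, ps i) * Real.log t + ∑ i ∈ Z, ps i * Real.log (ps i / q i)) := by
      intro t ht
      have hsplit : ∀ g : Fin m → ℝ, (∑ i, g i) = ∑ i ∈ P, g i + ∑ i ∈ Z, g i := by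
        intro g
        rw [hPdef, hZdef]
        exact (Finset.sum_filter_add_sum_filter_not _ _ _).symm
      have hfZ0 : ∀ i ∈ Z, f i 0 = 0 := by
        intro i hi
        simp [hf, hZ0 i hi]
      have hfZt : ∀ i ∈ Z, f i t = t * (ps i * (Real.log t + Real.log (ps i / q i))) := by
        intro i hi
        have h0 : phat i = 0 := hZ0 i hi
        have h1 : phat i + t * (ps i - phat i) = t * ps i := by rw [h0]; ring
        have h2 : t * ps i / q i = t * (ps i / q i) := by ring
        rw [hf]
        simp only []
        rw [h1, h2, Real.log_mul (ne_of_gt ht) (ne_of_gt (div_pos (hpspos i) (hqpos i)))]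
        ring
      rw [hQdef]
      simp only []
      rw [hsplit (fun i => f i t), hsplit (fun i => f i 0)]
      rw [Finset.sum_congr rfl hfZ0, Finset.sum_congr rfl hfZt]
      have e1 : ∑ i ∈ P, (f i t - f i 0) / t = ((∑ i ∈ P, f i t) - ∑ i ∈ P, f i 0) / t := by
        rw [← Finset.sum_sub_distrib, Finset.sum_div]
      have e2 : (∑ i ∈ Z, ps i) * Real.log t + ∑ i ∈ Z, ps i * Real.log (ps i / q i)
          = ∑ i ∈ Z, ps i * (Real.log t + Real.log (ps i / q i)) := by
        rw [Finset.sum_mul, ← Finset.sum_add_distrib]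
        exact Finset.sum_congr rfl (fun i _ => by ring)
      rw [e1, e2, ← Finset.mul_sum, Finset.sum_const_zero]
      field_simp
      ring
    -- the sum over P of difference quotients converges
    set D : ℝ := ∑ i ∈ P, ((ps i - phat i) * Real.log (phat i / q i) + (ps i - phat i)) with hD
    have hT1 : Tendsto (fun t => ∑ i ∈ P, (f i t - f i 0) / t) (𝓝[>] (0:ℝ)) (𝓝 D) := by
      apply tendsto_finset_sum
      intro i hi
      have hpi : 0 < phat i := by rw [hPdef] at hi; simpa using hi
      have hd := term_hasDerivAt (phat i) (ps i - phat i) (q i) hpi (hqpos i)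
      have hs := (hasDerivAt_iff_tendsto_slope.1 hd).mono_left
        (nhdsWithin_mono 0 (fun x hx => ne_of_gt hx))
      apply hs.congr'
      filter_upwards [self_mem_nhdsWithin] with t ht
      rw [slope_def_field, sub_zero]
    have hA : 0 < ∑ i ∈ Z, ps i := by
      have h1 := Finset.single_le_sum (f := ps) (fun i _ => le_of_lt (hpspos i)) hjZ
      linarith [hpspos j]
    have hT2 : Tendsto (fun t => (∑ i ∈ Z, ps i) * Real.log t
        + ∑ i ∈ Z, ps i * Real.log (ps i / q i)) (𝓝[>] (0:ℝ)) atBot := by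
      apply tendsto_atBot_add_const_right
      exact Real.tendsto_log_nhdsGT_zero.const_mul_atBot hA
    have hQtend : Tendsto Q (𝓝[>] (0:ℝ)) atBot := by
      apply Filter.Tendsto.congr' _ (Filter.Tendsto.add_atBot hT1 hT2)
      filter_upwards [self_mem_nhdsWithin] with t ht
      exact (hdecomp t ht).symm
    have hev1 : ∀ᶠ t in 𝓝[>] (0:ℝ), Q t ≤ -1 := hQtend.eventually_le_atBot (-1)
    have hev2 : ∀ᶠ t in 𝓝[>] (0:ℝ), 0 ≤ Q t := by
      filter_upwards [Ioc_mem_nhdsGT_of_mem (α := ℝ) ⟨le_refl 0, one_pos⟩] with t ht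
      exact hQnonneg t ht
    obtain ⟨t, h1, h2⟩ := (hev1.and hev2).exists
    linarith
  -- Step 2: the derivative inequality and algebraic identity
  intro p hp
  have hpPMF : IsPMF p := hsub p hp
  set c : Fin m → ℝ := fun i => p i - phat i with hc
  have hsum_c : ∑ i, c i = 0 := by
    simp only [hc]
    rw [Finset.sum_sub_distrib, hpPMF.2, hphatPMF.2, sub_self]
  have hDer : HasDerivAt (fun t => ∑ i, (phat i + t * c i) * Real.log ((phat i + t * c i) / q i))
      (∑ i, (c i * Real.log (phat i / q i) + c i)) 0 :=
    HasDerivAt.fun_sum (fun i _ => term_hasDerivAt (phat i) (c i) (q i) (hphatpos i) (hqpos i))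
  have h0le : 0 ≤ ∑ i, (c i * Real.log (phat i / q i) + c i) := by
    apply deriv_nonneg_of_right_min hDer
    intro t ht
    exact hrmin p hp t ht
  have h0le' : 0 ≤ ∑ i, c i * Real.log (phat i / q i) := by
    rw [Finset.sum_add_distrib, hsum_c, add_zero] at h0le
    exact h0le
  have hid : KL p q - KL p phat = ∑ i, p i * Real.log (phat i / q i) := by
    unfold KL
    rw [← Finset.sum_sub_distrib]
    apply Finset.sum_congr rfl
    intro i _
    by_cases hpi : p i = 0
    · simp [hpi]
    · rw [← mul_sub, Real.log_div hpi (ne_of_gt (hqpos i)),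
        Real.log_div hpi (ne_of_gt (hphatpos i)),
        Real.log_div (ne_of_gt (hphatpos i)) (ne_of_gt (hqpos i))]
      ring
  have hid2 : ∑ i, c i * Real.log (phat i / q i)
      = (KL p q - KL p phat) - KL phat q := by
    rw [hid]
    unfold KL
    rw [← Finset.sum_sub_distrib]
    apply Finset.sum_congr rfl
    intro i _
    rw [hc]
    simp only []
    rw [Real.log_div (ne_of_gt (hphatpos i)) (ne_of_gt (hqpos i))]
    ring
  linarith [hid2 ▸ h0le']
end

section
/- Let q be a rational probability vector with all q_i > 0 on a finite alphabet, written with common denominator n_0. For n = u·n_0, define the two-way probability w(ν; q) = π(ν; q)·π(q; ν) for n-types ν with all ν_i > 0, where π(q; ν) is the probability of obtaining type q in n iid draws from ν. Then (1/n) log w(ν^n; q) → −J(p, q) = −∑_i (p_i log(p_i/q_i) + q_i log(q_i/p_i)) for any sequence of such n-types ν^n converging to a strictly positive vector p. -/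
open Real Filter Topology Finset

/-- Jeffreys (symmetrized) divergence. -/
noncomputable def Jdiv {m : ℕ} (p q : Fin m → ℝ) : ℝ :=
  ∑ i, (p i * Real.log (p i / q i) + q i * Real.log (q i / p i))

noncomputable def gg (k : ℕ) : ℝ := Real.log (Nat.factorial k) - ((k:ℝ) * Real.log k - k)

lemma gg_eq (k : ℕ) (hk : 1 ≤ k) :
    gg k = Real.log (Stirling.stirlingSeq k) + Real.log (2*k) / 2 := by
  have hk0 : (0:ℝ) < k := by exact_mod_cast hk
  have hden : (0:ℝ) < Real.sqrt (2 * k) * ((k:ℝ) / Real.exp 1) ^ k := by positivity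
  have hfact : (Nat.factorial k : ℝ)
      = Stirling.stirlingSeq k * (Real.sqrt (2 * k) * ((k:ℝ) / Real.exp 1) ^ k) := by
    rw [Stirling.stirlingSeq, div_mul_cancel₀]
    exact ne_of_gt hden
  have hs : 0 < Stirling.stirlingSeq k := by
    rw [Stirling.stirlingSeq]
    positivity
  rw [gg, hfact, Real.log_mul (ne_of_gt hs) (ne_of_gt hden),
    Real.log_mul (by positivity) (by positivity), Real.log_sqrt (by positivity),
    Real.log_pow, Real.log_div (ne_of_gt hk0) (Real.exp_ne_zero 1), Real.log_exp]
  push_cast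
  ring

lemma gg_bound : ∃ C : ℝ, ∀ k : ℕ, 1 ≤ k → |gg k| ≤ C + Real.log (2*k) := by
  obtain ⟨a, ha, hab⟩ := Stirling.stirlingSeq'_bounded_by_pos_constant
  refine ⟨|Real.log a| + |Real.log (Stirling.stirlingSeq 1)|, fun k hk => ?_⟩
  obtain ⟨k', rfl⟩ : ∃ k', k = k' + 1 := ⟨k-1, by omega⟩
  have h1 : Real.log a ≤ Real.log (Stirling.stirlingSeq (k' + 1)) :=
    Real.log_le_log ha (hab k')
  have h2 : Real.log (Stirling.stirlingSeq (k' + 1)) ≤ Real.log (Stirling.stirlingSeq 1) := by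
    have := Stirling.stirlingSeq'_antitone (Nat.zero_le k')
    simp only [Function.comp, Nat.succ_eq_add_one] at this
    exact Real.log_le_log (Stirling.stirlingSeq'_pos k') (by simpa using this)
  have habs : |Real.log (Stirling.stirlingSeq (k' + 1))|
      ≤ |Real.log a| + |Real.log (Stirling.stirlingSeq 1)| := by
    rw [abs_le]
    constructor
    · have := neg_abs_le (Real.log a); nlinarith [abs_nonneg (Real.log (Stirling.stirlingSeq 1))]
    · have := le_abs_self (Real.log (Stirling.stirlingSeq 1)); nlinarith [abs_nonneg (Real.log a)]
  have hlog2k : 0 ≤ Real.log (2 * (k' + 1 : ℕ)) := by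
    apply Real.log_nonneg
    have : (1:ℝ) ≤ (k' + 1 : ℕ) := by exact_mod_cast Nat.one_le_iff_ne_zero.mpr (by omega)
    nlinarith
  rw [gg_eq _ hk]
  calc |Real.log (Stirling.stirlingSeq (k'+1)) + Real.log (2*(k'+1:ℕ)) / 2|
      ≤ |Real.log (Stirling.stirlingSeq (k'+1))| + |Real.log (2*(k'+1:ℕ)) / 2| := abs_add_le _ _
    _ ≤ |Real.log a| + |Real.log (Stirling.stirlingSeq 1)| + Real.log (2*(k'+1:ℕ)) := by
        rw [abs_div, abs_of_nonneg hlog2k]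
        simp only [abs_two]
        linarith [habs]

lemma cast_floor_eq {m : ℕ} {n : ℕ} (hn : 0 < n) {ν : Fin m → ℝ}
    (hν : ∀ i, ∃ k : ℕ, ν i = (k : ℝ) / n) (i : Fin m) :
    ((⌊(n : ℝ) * ν i⌋₊ : ℝ)) = (n : ℝ) * ν i := by
  obtain ⟨k, hk⟩ := hν i
  have hn' : (n:ℝ) ≠ 0 := by positivity
  have : (n : ℝ) * ν i = (k : ℝ) := by rw [hk]; field_simp
  rw [this, Nat.floor_natCast]

lemma log_typeProb {m : ℕ} {n : ℕ} (hn : 0 < n) (ν q : Fin m → ℝ)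
    (hν : IsType n ν) (hνpos : ∀ i, 0 < ν i) (hq : ∀ i, 0 < q i) :
    Real.log (typeProb n ν q)
      = gg n - ∑ i, gg ⌊(n : ℝ) * ν i⌋₊ - (n : ℝ) * KL ν q := by
  set k : Fin m → ℕ := fun i => ⌊(n : ℝ) * ν i⌋₊ with hkdef
  have hcast : ∀ i, ((k i : ℝ)) = (n : ℝ) * ν i := cast_floor_eq hn hν.2
  have hkpos : ∀ i, 0 < k i := by
    intro i
    have := hcast i
    have h2 : (0:ℝ) < (k i : ℝ) := by
      rw [this]; exact mul_pos (by exact_mod_cast hn) (hνpos i)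
    exact_mod_cast h2
  have hsum : ∑ i, ((k i : ℝ)) = (n : ℝ) := by
    rw [Finset.sum_congr rfl (fun i _ => hcast i), ← Finset.mul_sum, hν.1.2, mul_one]
  have hn' : (0:ℝ) < n := by exact_mod_cast hn
  -- log of the product
  have hfacpos : (0:ℝ) < ∏ i, (Nat.factorial (k i) : ℝ) := by positivity
  have hlog1 : Real.log (typeProb n ν q)
      = Real.log (Nat.factorial n) - ∑ i, Real.log (Nat.factorial (k i))
        + ∑ i, (k i : ℝ) * Real.log (q i) := by
    have hm : mult n ν ≠ 0 := by
      rw [mult]; exact div_ne_zero (by positivity) (ne_of_gt hfacpos)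
    have hp : (∏ i, q i ^ ((n : ℝ) * ν i)) ≠ 0 := by
      apply Finset.prod_ne_zero_iff.2
      intro i _
      exact ne_of_gt (Real.rpow_pos_of_pos (hq i) _)
    rw [typeProb, Real.log_mul hm hp, mult,
      Real.log_div (by positivity) (ne_of_gt hfacpos),
      Real.log_prod (fun i _ => by positivity),
      Real.log_prod (fun i _ => ne_of_gt (Real.rpow_pos_of_pos (hq i) _))]
    congr 1
    apply Finset.sum_congr rfl
    intro i _
    rw [Real.log_rpow (hq i), ← hcast i]
  -- per-term identity
  have hterm : ∀ i, gg (k i) + (n:ℝ) * (ν i * Real.log (ν i / q i))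
      = Real.log (Nat.factorial (k i)) + (k i : ℝ) - (k i : ℝ) * Real.log n
        - (k i : ℝ) * Real.log (q i) := by
    intro i
    have hki : (0:ℝ) < (k i : ℝ) := by exact_mod_cast hkpos i
    have hνi : ν i = (k i : ℝ) / n := by
      rw [eq_div_iff (ne_of_gt hn'), mul_comm]; exact (hcast i).symm
    have : Real.log (ν i / q i) = Real.log (k i) - Real.log n - Real.log (q i) := by
      rw [hνi, Real.log_div (by positivity) (ne_of_gt (hq i)),
        Real.log_div (ne_of_gt hki) (ne_of_gt hn')]
    rw [gg, this]
    have h3 : (n:ℝ) * ν i = (k i : ℝ) := (hcast i).symm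
    linear_combination (Real.log (k i) - Real.log (n:ℝ) - Real.log (q i)) * h3
  have hsum2 : ∑ i, (gg (k i) + (n:ℝ) * (ν i * Real.log (ν i / q i)))
      = ∑ i, Real.log (Nat.factorial (k i)) + (n:ℝ) - (n:ℝ) * Real.log n
        - ∑ i, (k i : ℝ) * Real.log (q i) := by
    rw [Finset.sum_congr rfl (fun i _ => hterm i)]
    rw [show ∀ f g h s : Fin m → ℝ, (∑ i, (f i + g i - h i - s i))
        = ∑ i, f i + ∑ i, g i - ∑ i, h i - ∑ i, s i from
      fun f g h s => by simp [Finset.sum_sub_distrib, Finset.sum_add_distrib]]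
    rw [hsum, ← Finset.sum_mul, hsum]
  rw [hlog1, KL, Finset.mul_sum]
  have e1 : ∑ i, (gg (k i) + (n:ℝ) * (ν i * Real.log (ν i / q i)))
      = ∑ i, gg (k i) + ∑ i, (n:ℝ) * (ν i * Real.log (ν i / q i)) :=
    Finset.sum_add_distrib
  rw [e1] at hsum2
  have : ∑ i, (n:ℝ) * (ν i * Real.log (ν i / q i))
      = ∑ x, (n:ℝ) * (ν x * Real.log (ν x / q x)) := rfl
  rw [gg]
  linarith [hsum2]

lemma Jdiv_eq {m : ℕ} (p q : Fin m → ℝ) : Jdiv p q = KL p q + KL q p := by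
  rw [Jdiv, KL, KL, ← Finset.sum_add_distrib]

lemma typeProb_pos {m : ℕ} (n : ℕ) (ν q : Fin m → ℝ) (hq : ∀ i, 0 < q i) :
    0 < typeProb n ν q := by
  rw [typeProb, mult]
  have h1 : (0:ℝ) < ∏ i, (Nat.factorial ⌊(n : ℝ) * ν i⌋₊ : ℝ) := by positivity
  have h2 : (0:ℝ) < ∏ i, q i ^ ((n : ℝ) * ν i) :=
    Finset.prod_pos fun i _ => Real.rpow_pos_of_pos (hq i) _
  positivity

lemma type_floor_bounds {m : ℕ} {n : ℕ} (hn : 0 < n) {ν : Fin m → ℝ}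
    (hν : IsType n ν) (hνpos : ∀ i, 0 < ν i) (i : Fin m) :
    1 ≤ ⌊(n : ℝ) * ν i⌋₊ ∧ ⌊(n : ℝ) * ν i⌋₊ ≤ n := by
  have hcast : ∀ j, ((⌊(n : ℝ) * ν j⌋₊ : ℝ)) = (n : ℝ) * ν j := cast_floor_eq hn hν.2
  have h1 : (0:ℝ) < (⌊(n : ℝ) * ν i⌋₊ : ℝ) := by
    rw [hcast i]; exact mul_pos (by exact_mod_cast hn) (hνpos i)
  have hsum : ((∑ j, ⌊(n : ℝ) * ν j⌋₊ : ℕ) : ℝ) = (n : ℝ) := by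
    push_cast
    rw [Finset.sum_congr rfl (fun j _ => hcast j), ← Finset.mul_sum, hν.1.2, mul_one]
  have hsum' : ∑ j, ⌊(n : ℝ) * ν j⌋₊ = n := by exact_mod_cast hsum
  constructor
  · exact_mod_cast h1
  · calc ⌊(n : ℝ) * ν i⌋₊ ≤ ∑ j, ⌊(n : ℝ) * ν j⌋₊ :=
        Finset.single_le_sum (f := fun j => ⌊(n : ℝ) * ν j⌋₊) (fun j _ => Nat.zero_le _)
          (Finset.mem_univ i)
    _ = n := hsum'

lemma tendsto_gg_div (n₀ : ℕ) (hn₀ : 0 < n₀) (a : ℕ → ℕ)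
    (ha : ∀ᶠ u in atTop, 1 ≤ a u ∧ a u ≤ u * n₀) :
    Tendsto (fun u => gg (a u) / ((u * n₀ : ℕ) : ℝ)) atTop (𝓝 0) := by
  obtain ⟨C, hC⟩ := gg_bound
  have hcomp : Tendsto (fun u : ℕ => ((u * n₀ : ℕ) : ℝ)) atTop atTop := by
    apply tendsto_natCast_atTop_atTop.comp
    exact tendsto_atTop_atTop.mpr fun b => ⟨b, fun x hx =>
      le_trans hx (Nat.le_mul_of_pos_right x hn₀)⟩
  have hf : Tendsto (fun x : ℝ => (C + Real.log (2 * x)) / x) atTop (𝓝 0) := by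
    have h1 : Tendsto (fun x : ℝ => (C + Real.log 2) / x) atTop (𝓝 0) :=
      tendsto_const_nhds.div_atTop tendsto_id
    have h2 : Tendsto (fun x : ℝ => Real.log x / x) atTop (𝓝 0) :=
      Real.isLittleO_log_id_atTop.tendsto_div_nhds_zero
    have := h1.add h2
    rw [add_zero] at this
    apply this.congr'
    filter_upwards [eventually_gt_atTop (0:ℝ)] with x hx
    rw [Real.log_mul (by norm_num) (ne_of_gt hx)]
    ring
  apply squeeze_zero_norm' (a := fun u => (C + Real.log (2 * ((u * n₀ : ℕ) : ℝ))) / ((u * n₀ : ℕ) : ℝ))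
  · filter_upwards [ha, eventually_ge_atTop 1] with u hu hu1
    have hnpos : 0 < u * n₀ := Nat.mul_pos (by omega) hn₀
    have hnr : (0:ℝ) < ((u * n₀ : ℕ) : ℝ) := by exact_mod_cast hnpos
    rw [Real.norm_eq_abs, abs_div, abs_of_pos hnr, div_le_div_iff_of_pos_right hnr]
    calc |gg (a u)| ≤ C + Real.log (2 * (a u)) := hC _ hu.1
      _ ≤ C + Real.log (2 * ((u * n₀ : ℕ) : ℝ)) := by
          gcongr
          · have : (0:ℝ) < 2 * (a u : ℝ) := by
              have : (1:ℝ) ≤ (a u : ℝ) := by exact_mod_cast hu.1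
              linarith
            exact this
          · exact_mod_cast hu.2
  · exact hf.comp hcomp

/-- For a rational, strictly positive source q with common denominator n₀
and n = u·n₀, the two-way probability w(ν; q) = π(ν; q)·π(q; ν) of strictly positive
n-types ν^n converging to a strictly positive p satisfies
(1/n) log w(ν^n; q) → −J(p, q). -/
theorem stmt18 {m : ℕ} (q : Fin m → ℝ) (hq : IsPMF q) (hqpos : ∀ i, 0 < q i)
    (n₀ : ℕ) (hn₀ : 0 < n₀) (cq : Fin m → ℕ) (hrat : ∀ i, q i = (cq i : ℝ) / n₀)
    (p : Fin m → ℝ) (hp : IsPMF p) (hppos : ∀ i, 0 < p i)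
    (T : ℕ → Fin m → ℝ)
    (hT : ∀ u, 0 < u → IsType (u * n₀) (T u) ∧ ∀ i, 0 < T u i)
    (hlim : Tendsto T atTop (𝓝 p)) :
    Tendsto
      (fun u => Real.log (typeProb (u * n₀) (T u) q * typeProb (u * n₀) q (T u)) /
        ((u * n₀ : ℕ) : ℝ)) atTop (𝓝 (-(Jdiv p q))) := by
  have hcq1 : ∀ i, 1 ≤ cq i := by
    intro i
    rcases Nat.eq_zero_or_pos (cq i) with h | h
    · exfalso; have := hqpos i; rw [hrat i, h] at this; norm_num at this
    · exact h
  have hcqn₀ : ∀ i, cq i ≤ n₀ := by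
    intro i
    have hqi1 : q i ≤ 1 := by
      have h2 := hq.2
      calc q i ≤ ∑ j, q j :=
            Finset.single_le_sum (f := q) (fun j _ => le_of_lt (hqpos j)) (Finset.mem_univ i)
        _ = 1 := h2
    have : (cq i : ℝ) ≤ (n₀ : ℝ) := by
      rw [hrat i] at hqi1
      rw [div_le_one (by exact_mod_cast hn₀)] at hqi1
      exact hqi1
    exact_mod_cast this
  have hTi : ∀ i, Tendsto (fun u => T u i) atTop (𝓝 (p i)) := by
    rw [tendsto_pi_nhds] at hlim; exact hlim
  have hJ : Tendsto (fun u => Jdiv (T u) q) atTop (𝓝 (Jdiv p q)) := by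
    simp only [Jdiv]
    apply tendsto_finset_sum
    intro i _
    have t1 : Tendsto (fun u => T u i * Real.log (T u i / q i)) atTop
        (𝓝 (p i * Real.log (p i / q i))) :=
      (hTi i).mul (Tendsto.log ((hTi i).div_const (q i))
        (ne_of_gt (div_pos (hppos i) (hqpos i))))
    have t2 : Tendsto (fun u => q i * Real.log (q i / T u i)) atTop
        (𝓝 (q i * Real.log (q i / p i))) :=
      tendsto_const_nhds.mul (Tendsto.log (tendsto_const_nhds.div (hTi i)
        (ne_of_gt (hppos i))) (ne_of_gt (div_pos (hqpos i) (hppos i))))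
    exact t1.add t2
  have hE1 : Tendsto (fun u => gg (u * n₀) / ((u * n₀ : ℕ) : ℝ)) atTop (𝓝 0) := by
    apply tendsto_gg_div n₀ hn₀
    filter_upwards [eventually_ge_atTop 1] with u hu
    exact ⟨Nat.one_le_iff_ne_zero.mpr (Nat.mul_ne_zero (by omega) (by omega)), le_refl _⟩
  have hE2 : ∀ i, Tendsto (fun u => gg ⌊((u * n₀ : ℕ) : ℝ) * T u i⌋₊ / ((u * n₀ : ℕ) : ℝ))
      atTop (𝓝 0) := by
    intro i
    apply tendsto_gg_div n₀ hn₀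
    filter_upwards [eventually_ge_atTop 1] with u hu
    have h := hT u (by omega)
    exact type_floor_bounds (Nat.mul_pos (by omega) hn₀) h.1 h.2 i
  have hE3 : ∀ i, Tendsto (fun u => gg (u * cq i) / ((u * n₀ : ℕ) : ℝ)) atTop (𝓝 0) := by
    intro i
    apply tendsto_gg_div n₀ hn₀
    filter_upwards [eventually_ge_atTop 1] with u hu
    exact ⟨Nat.one_le_iff_ne_zero.mpr (Nat.mul_ne_zero (by omega) (by have := hcq1 i; omega)),
      Nat.mul_le_mul_left u (hcqn₀ i)⟩
  have hG : Tendsto (fun u => (2 * gg (u * n₀) - ∑ i, gg ⌊((u * n₀ : ℕ) : ℝ) * T u i⌋₊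
      - ∑ i, gg (u * cq i)) / ((u * n₀ : ℕ) : ℝ) - Jdiv (T u) q)
      atTop (𝓝 (0 - Jdiv p q)) := by
    apply Tendsto.sub _ hJ
    have heq : (fun u => (2 * gg (u * n₀) - ∑ i, gg ⌊((u * n₀ : ℕ) : ℝ) * T u i⌋₊
        - ∑ i, gg (u * cq i)) / ((u * n₀ : ℕ) : ℝ))
        = fun u => 2 * (gg (u * n₀) / ((u * n₀ : ℕ) : ℝ))
          - ∑ i, gg ⌊((u * n₀ : ℕ) : ℝ) * T u i⌋₊ / ((u * n₀ : ℕ) : ℝ)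
          - ∑ i, gg (u * cq i) / ((u * n₀ : ℕ) : ℝ) := by
      funext u
      rw [sub_div, sub_div, Finset.sum_div, Finset.sum_div, mul_div_assoc]
    rw [heq]
    have t := ((hE1.const_mul 2).sub
        (tendsto_finset_sum Finset.univ (fun i _ => hE2 i))).sub
        (tendsto_finset_sum Finset.univ (fun i _ => hE3 i))
    simpa using t
  rw [zero_sub] at hG
  apply hG.congr'
  filter_upwards [eventually_ge_atTop 1] with u hu
  have hnpos : 0 < u * n₀ := Nat.mul_pos (by omega) hn₀
  have hnr : (0:ℝ) < ((u * n₀ : ℕ) : ℝ) := by exact_mod_cast hnpos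
  have hTu := hT u (by omega)
  have hqt : IsType (u * n₀) q := by
    refine ⟨hq, fun i => ⟨u * cq i, ?_⟩⟩
    rw [hrat i]
    push_cast
    rw [div_eq_div_iff (by positivity) (by positivity)]
    ring
  have hA := log_typeProb hnpos (T u) q hTu.1 hTu.2 hqpos
  have hB := log_typeProb hnpos q (T u) hqt hqpos hTu.2
  have hfl : ∀ i, ⌊((u * n₀ : ℕ) : ℝ) * q i⌋₊ = u * cq i := by
    intro i
    have : ((u * n₀ : ℕ) : ℝ) * q i = ((u * cq i : ℕ) : ℝ) := by
      rw [hrat i]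
      push_cast
      field_simp
    rw [this, Nat.floor_natCast]
  rw [Finset.sum_congr rfl (fun i _ => by rw [hfl i])] at hB
  have hApos := typeProb_pos (u * n₀) (T u) q hqpos
  have hBpos := typeProb_pos (u * n₀) q (T u) hTu.2
  rw [Real.log_mul (ne_of_gt hApos) (ne_of_gt hBpos), hA, hB, Jdiv_eq]
  field_simp
  ring
end
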